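/- Let m ≥ 1, K ≥ 1, d₁ ≥ 2, d₂ ≥ 2 be integers and let T be a real number with 0 ≤ T ≤ K − 1. Then ∫_0^T (t^{m-1}e^{-t}/(m-1)!) · g(T−t;K,d₁) · g(T−t;K,d₂) dt ≥ (∫_0^T (t^{m-1}e^{-t}/(m-1)!) · g(T−t;K,d₁) dt) · (∫_0^T (t^{m-1}e^{-t}/(m-1)!) · g(T−t;K,d₂) dt). -/

import Mathlib

open Real intervalIntegral

/-- `g T K d = ∫_0^T (t^{K-1} e^{-t}/(K-1)!) · e^{-(T-t)(d-1)} dt` (Eq. (3) of the paper). -/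
noncomputable def g (T : ℝ) (K d : ℕ) : ℝ :=
  ∫ t in (0:ℝ)..T, (t ^ (K - 1) * Real.exp (-t) / (Nat.factorial (K - 1) : ℝ)) *
    Real.exp (-(T - t) * ((d : ℝ) - 1))

section Aux
open MeasureTheory Set


lemma erlang_mass_le_one (n : ℕ) (T : ℝ) (hT : 0 ≤ T) :
    (∫ t in (0:ℝ)..T, t ^ n * Real.exp (-t) / (Nat.factorial n : ℝ)) ≤ 1 := by
  have hfact : (0:ℝ) < (Nat.factorial n : ℝ) := by positivity
  have hrepr : ∀ x : ℝ, x ∈ Ioi (0:ℝ) →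
      Real.exp (-x) * x ^ (((n:ℝ) + 1) - 1) = x ^ n * Real.exp (-x) := by
    intro x hx
    rw [add_sub_cancel_right, Real.rpow_natCast, mul_comm]
  have hInt : IntegrableOn (fun x => Real.exp (-x) * x ^ (((n:ℝ)+1) - 1)) (Ioi 0) :=
    Real.GammaIntegral_convergent (by positivity)
  have hInt' : IntegrableOn (fun x : ℝ => x ^ n * Real.exp (-x)) (Ioi 0) :=
    hInt.congr_fun hrepr measurableSet_Ioi
  have key : (∫ t in (0:ℝ)..T, t ^ n * Real.exp (-t)) ≤ (Nat.factorial n : ℝ) := by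
    rw [intervalIntegral.integral_of_le hT]
    have h1 : (∫ t in Ioc (0:ℝ) T, t ^ n * Real.exp (-t))
        ≤ ∫ t in Ioi (0:ℝ), t ^ n * Real.exp (-t) := by
      apply setIntegral_mono_set hInt'
      · filter_upwards [ae_restrict_mem measurableSet_Ioi] with x hx
        have : (0:ℝ) < x := hx
        positivity
      · exact HasSubset.Subset.eventuallyLE Ioc_subset_Ioi_self
    refine h1.trans ?_
    have h2 : (∫ t in Ioi (0:ℝ), t ^ n * Real.exp (-t))
        = Real.Gamma ((n:ℝ) + 1) := by
      rw [Real.Gamma_eq_integral (by positivity)]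
      exact (setIntegral_congr_fun measurableSet_Ioi hrepr).symm
    rw [h2, Real.Gamma_nat_eq_factorial]
  calc (∫ t in (0:ℝ)..T, t ^ n * Real.exp (-t) / (Nat.factorial n : ℝ))
      = (∫ t in (0:ℝ)..T, t ^ n * Real.exp (-t)) / (Nat.factorial n : ℝ) := by
        rw [intervalIntegral.integral_div]
    _ ≤ 1 := by rw [div_le_one hfact]; exact key
lemma g_repr (T : ℝ) (K d : ℕ) : g T K d =
    Real.exp (-T * ((d:ℝ) - 1)) * ∫ u in (0:ℝ)..T,
      (u ^ (K - 1) * Real.exp (-u) / (Nat.factorial (K - 1) : ℝ)) * Real.exp (u * ((d:ℝ) - 1)) := by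
  rw [g, ← intervalIntegral.integral_const_mul]
  apply intervalIntegral.integral_congr
  intro t _
  simp only []
  rw [show -(T - t) * ((d:ℝ) - 1) = -T * ((d:ℝ)-1) + t * ((d:ℝ)-1) by ring, Real.exp_add]
  ring

lemma g_cont (K d : ℕ) : Continuous (fun T => g T K d) := by
  have : (fun T => g T K d) = fun T => Real.exp (-T * ((d:ℝ) - 1)) * ∫ u in (0:ℝ)..T,
      (u ^ (K - 1) * Real.exp (-u) / (Nat.factorial (K - 1) : ℝ)) * Real.exp (u * ((d:ℝ) - 1)) := by
    funext T; exact g_repr T K d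
  rw [this]
  apply Continuous.mul
  · exact (Real.continuous_exp.comp (by continuity))
  · apply intervalIntegral.continuous_primitive
    intro a b
    apply Continuous.intervalIntegrable
    continuity

lemma g_nonneg (T : ℝ) (hT : 0 ≤ T) (K d : ℕ) : 0 ≤ g T K d := by
  apply intervalIntegral.integral_nonneg hT
  intro t ht
  have ht0 : 0 ≤ t := ht.1
  positivity

lemma g_sub_repr (X : ℝ) (K d : ℕ) : g X K d =
    ∫ u in (0:ℝ)..X, ((X - u) ^ (K - 1) * Real.exp (-(X - u)) / (Nat.factorial (K - 1) : ℝ)) *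
      Real.exp (-u * ((d:ℝ) - 1)) := by
  have h1 : (∫ u in (0:ℝ)..X, ((X - u) ^ (K - 1) * Real.exp (-(X - u)) / (Nat.factorial (K - 1) : ℝ)) *
      Real.exp (-u * ((d:ℝ) - 1)))
      = ∫ u in (0:ℝ)..X, (fun v => (v ^ (K - 1) * Real.exp (-v) / (Nat.factorial (K - 1) : ℝ)) *
        Real.exp (-(X - v) * ((d:ℝ) - 1))) (X - u) := by
    apply intervalIntegral.integral_congr
    intro t _
    simp only []
    congr 2
    ring_nf
  rw [h1, intervalIntegral.integral_comp_sub_left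
    (fun v => (v ^ (K - 1) * Real.exp (-v) / (Nat.factorial (K - 1) : ℝ)) *
      Real.exp (-(X - v) * ((d:ℝ) - 1))) X, sub_zero, sub_self, g]

lemma pow_exp_mono (n : ℕ) : MonotoneOn (fun t : ℝ => t ^ n * Real.exp (-t)) (Icc 0 (n:ℝ)) := by
  rcases n with _ | n
  · intro a ha b hb hab
    simp only [Nat.cast_zero] at ha hb
    have : a = 0 := le_antisymm ha.2 ha.1
    have hb0 : b = 0 := le_antisymm hb.2 hb.1
    simp [this, hb0]
  · apply monotoneOn_of_deriv_nonneg (convex_Icc _ _)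
    · exact ((continuous_pow _).mul (Real.continuous_exp.comp continuous_neg)).continuousOn
    · apply Differentiable.differentiableOn
      exact (differentiable_pow _).mul (Real.differentiable_exp.comp differentiable_neg)
    · intro x hx
      rw [interior_Icc] at hx
      have hx0 : 0 < x := hx.1
      have hxn : x < (n:ℝ) + 1 := by exact_mod_cast hx.2
      have hderiv : deriv (fun t : ℝ => t ^ (n+1) * Real.exp (-t)) x
          = (n+1) * x ^ n * Real.exp (-x) - x ^ (n+1) * Real.exp (-x) := by
        have h1 : HasDerivAt (fun t : ℝ => t ^ (n+1)) ((n+1) * x ^ n) x := by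
          simpa using hasDerivAt_pow (n+1) x
        have h2 : HasDerivAt (fun t : ℝ => Real.exp (-t)) (-Real.exp (-x)) x := by
          simpa using (hasDerivAt_neg x).exp
        have := h1.mul h2
        rw [show deriv (fun t : ℝ => t ^ (n+1) * Real.exp (-t)) x = _ from this.deriv]
        ring
      rw [hderiv]
      have : x ^ (n+1) = x ^ n * x := pow_succ x n
      rw [this]
      have hxe : (0:ℝ) < Real.exp (-x) := Real.exp_pos _
      nlinarith [mul_nonneg (mul_nonneg (pow_nonneg hx0.le n) (Real.exp_pos (-x)).le)
        (by linarith : (0:ℝ) ≤ (n:ℝ) + 1 - x)]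

lemma g_mono (K d : ℕ) (hK : 1 ≤ K) {S T : ℝ} (hS : 0 ≤ S) (hST : S ≤ T)
    (hT : T ≤ (K:ℝ) - 1) : g S K d ≤ g T K d := by
  have hcast : ((K - 1 : ℕ) : ℝ) = (K:ℝ) - 1 := by
    rw [Nat.cast_sub hK, Nat.cast_one]
  have hfact : (0:ℝ) < (Nat.factorial (K-1) : ℝ) := by positivity
  have hmem : ∀ {x : ℝ}, 0 ≤ x → x ≤ T → x ∈ Icc (0:ℝ) ((K-1:ℕ):ℝ) := by
    intro x h0 h1
    exact ⟨h0, by rw [hcast]; linarith⟩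
  rw [g_sub_repr S, g_sub_repr T]
  have hcont : ∀ X : ℝ, Continuous (fun u => ((X - u) ^ (K - 1) * Real.exp (-(X - u)) /
      (Nat.factorial (K - 1) : ℝ)) * Real.exp (-u * ((d:ℝ) - 1))) := by
    intro X; continuity
  have step1 : (∫ u in (0:ℝ)..S, ((S - u) ^ (K - 1) * Real.exp (-(S - u)) /
      (Nat.factorial (K - 1) : ℝ)) * Real.exp (-u * ((d:ℝ) - 1)))
      ≤ ∫ u in (0:ℝ)..S, ((T - u) ^ (K - 1) * Real.exp (-(T - u)) /
      (Nat.factorial (K - 1) : ℝ)) * Real.exp (-u * ((d:ℝ) - 1)) := by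
    apply intervalIntegral.integral_mono_on hS
      ((hcont S).intervalIntegrable _ _) ((hcont T).intervalIntegrable _ _)
    intro u hu
    have h1 : 0 ≤ S - u := by linarith [hu.2]
    have h2 : S - u ≤ T - u := by linarith
    have h3 : T - u ≤ T := by linarith [hu.1]
    have hm := pow_exp_mono (K-1) (hmem h1 (by linarith [hu.1]))
      (hmem (by linarith) (by linarith [hu.1])) h2
    apply mul_le_mul_of_nonneg_right _ (Real.exp_pos _).le
    apply div_le_div_of_nonneg_right ?_ hfact.le
    exact hm
  have step2 : (∫ u in (0:ℝ)..S, ((T - u) ^ (K - 1) * Real.exp (-(T - u)) /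
      (Nat.factorial (K - 1) : ℝ)) * Real.exp (-u * ((d:ℝ) - 1)))
      ≤ ∫ u in (0:ℝ)..T, ((T - u) ^ (K - 1) * Real.exp (-(T - u)) /
      (Nat.factorial (K - 1) : ℝ)) * Real.exp (-u * ((d:ℝ) - 1)) := by
    apply intervalIntegral.integral_mono_interval (le_refl (0:ℝ)) hS hST
    · filter_upwards [ae_restrict_mem measurableSet_Ioc] with x hx
      have : 0 ≤ T - x := by linarith [hx.2]
      positivity
    · exact (hcont T).intervalIntegrable _ _
  linarith


lemma chebyshev_correlation (T : ℝ) (hT : 0 ≤ T) (w f h : ℝ → ℝ)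
    (cw : Continuous w) (cf : Continuous f) (ch : Continuous h)
    (hw : ∀ t ∈ Icc (0:ℝ) T, 0 ≤ w t) (hf : ∀ t ∈ Icc (0:ℝ) T, 0 ≤ f t)
    (hh : ∀ t ∈ Icc (0:ℝ) T, 0 ≤ h t)
    (hW : (∫ t in (0:ℝ)..T, w t) ≤ 1)
    (hmono : ∀ s ∈ Icc (0:ℝ) T, ∀ t ∈ Icc (0:ℝ) T, s ≤ t → f t ≤ f s ∧ h t ≤ h s) :
    (∫ t in (0:ℝ)..T, w t * f t) * (∫ t in (0:ℝ)..T, w t * h t)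
      ≤ ∫ t in (0:ℝ)..T, w t * f t * h t := by
  set W := ∫ t in (0:ℝ)..T, w t with hWdef
  set F := ∫ t in (0:ℝ)..T, w t * f t with hFdef
  set H := ∫ t in (0:ℝ)..T, w t * h t with hHdef
  set A := ∫ t in (0:ℝ)..T, w t * f t * h t with hAdef
  have iw : ∀ a b : ℝ, IntervalIntegrable w volume a b := fun a b => cw.intervalIntegrable a b
  have iwf : ∀ a b : ℝ, IntervalIntegrable (fun t => w t * f t) volume a b :=
    fun a b => (cw.mul cf).intervalIntegrable a b
  have iwh : ∀ a b : ℝ, IntervalIntegrable (fun t => w t * h t) volume a b :=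
    fun a b => (cw.mul ch).intervalIntegrable a b
  have iwfh : ∀ a b : ℝ, IntervalIntegrable (fun t => w t * f t * h t) volume a b :=
    fun a b => ((cw.mul cf).mul ch).intervalIntegrable a b
  have hinner : ∀ s : ℝ, (∫ t in (0:ℝ)..T, w s * w t * (f s - f t) * (h s - h t))
      = w s * f s * h s * W - w s * f s * H - w s * h s * F + w s * A := by
    intro s
    have hexp : ∀ t : ℝ, w s * w t * (f s - f t) * (h s - h t)
        = (w s * f s * h s) * w t - (w s * f s) * (w t * h t)
          - (w s * h s) * (w t * f t) + w s * (w t * f t * h t) := by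
      intro t; ring
    have L : ∀ c1 c2 c3 c4 : ℝ,
        (∫ t in (0:ℝ)..T, (c1 * w t - c2 * (w t * h t) - c3 * (w t * f t)
          + c4 * (w t * f t * h t))) = c1 * W - c2 * H - c3 * F + c4 * A := by
      intro c1 c2 c3 c4
      rw [intervalIntegral.integral_add
            ((((iw 0 T).const_mul c1).sub ((iwh 0 T).const_mul c2)).sub
              ((iwf 0 T).const_mul c3)) ((iwfh 0 T).const_mul c4),
          intervalIntegral.integral_sub
            (((iw 0 T).const_mul c1).sub ((iwh 0 T).const_mul c2)) ((iwf 0 T).const_mul c3),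
          intervalIntegral.integral_sub ((iw 0 T).const_mul c1) ((iwh 0 T).const_mul c2),
          intervalIntegral.integral_const_mul, intervalIntegral.integral_const_mul,
          intervalIntegral.integral_const_mul, intervalIntegral.integral_const_mul]
    simp_rw [hexp]
    exact L _ _ _ _
  have hD : (∫ s in (0:ℝ)..T, (w s * f s * h s * W - w s * f s * H - w s * h s * F + w s * A))
      = A * W - F * H - H * F + W * A := by
    rw [intervalIntegral.integral_add
          ((((iwfh 0 T).mul_const W).sub ((iwf 0 T).mul_const H)).sub
            ((iwh 0 T).mul_const F)) ((iw 0 T).mul_const A),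
        intervalIntegral.integral_sub
          (((iwfh 0 T).mul_const W).sub ((iwf 0 T).mul_const H)) ((iwh 0 T).mul_const F),
        intervalIntegral.integral_sub ((iwfh 0 T).mul_const W) ((iwf 0 T).mul_const H),
        intervalIntegral.integral_mul_const, intervalIntegral.integral_mul_const,
        intervalIntegral.integral_mul_const, intervalIntegral.integral_mul_const]
  have hDnonneg : 0 ≤ ∫ s in (0:ℝ)..T,
      (w s * f s * h s * W - w s * f s * H - w s * h s * F + w s * A) := by
    apply intervalIntegral.integral_nonneg hT
    intro s hs
    rw [← hinner s]
    apply intervalIntegral.integral_nonneg hT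
    intro t ht
    have hws := hw s hs
    have hwt := hw t ht
    have hprod : 0 ≤ (f s - f t) * (h s - h t) := by
      rcases le_total s t with hst | hst
      · obtain ⟨h1, h2⟩ := hmono s hs t ht hst
        exact mul_nonneg (by linarith) (by linarith)
      · obtain ⟨h1, h2⟩ := hmono t ht s hs hst
        nlinarith
    calc (0:ℝ) ≤ (w s * w t) * ((f s - f t) * (h s - h t)) :=
          mul_nonneg (mul_nonneg hws hwt) hprod
      _ = w s * w t * (f s - f t) * (h s - h t) := by ring
  have key : F * H ≤ W * A := by rw [hD] at hDnonneg; linarith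
  have hA : 0 ≤ A := by
    apply intervalIntegral.integral_nonneg hT
    intro t ht
    exact mul_nonneg (mul_nonneg (hw t ht) (hf t ht)) (hh t ht)
  calc F * H ≤ W * A := key
    _ ≤ 1 * A := by apply mul_le_mul_of_nonneg_right hW hA
    _ = A := one_mul A

end Aux

/-- for integers `m ≥ 1`, `K ≥ 1`, `d₁ ≥ 2`, `d₂ ≥ 2` and real
`0 ≤ T ≤ K − 1`, the events that the two leaves are observed are positively correlated:
`∫_0^T Erlang(m,1)(t) g(T−t;K,d₁) g(T−t;K,d₂) dt ≥
 (∫_0^T Erlang(m,1)(t) g(T−t;K,d₁) dt) · (∫_0^T Erlang(m,1)(t) g(T−t;K,d₂) dt)`. -/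
theorem stmt_8 (m K d₁ d₂ : ℕ) (hm : 1 ≤ m) (hK : 1 ≤ K) (hd₁ : 2 ≤ d₁) (hd₂ : 2 ≤ d₂)
    (T : ℝ) (hT0 : 0 ≤ T) (hT1 : T ≤ (K : ℝ) - 1) :
    (∫ t in (0:ℝ)..T, (t ^ (m - 1) * Real.exp (-t) / (Nat.factorial (m - 1) : ℝ)) *
        g (T - t) K d₁) *
    (∫ t in (0:ℝ)..T, (t ^ (m - 1) * Real.exp (-t) / (Nat.factorial (m - 1) : ℝ)) *
        g (T - t) K d₂)
      ≤ ∫ t in (0:ℝ)..T, (t ^ (m - 1) * Real.exp (-t) / (Nat.factorial (m - 1) : ℝ)) *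
          g (T - t) K d₁ * g (T - t) K d₂ := by
  apply chebyshev_correlation T hT0
    (fun t => t ^ (m - 1) * Real.exp (-t) / (Nat.factorial (m - 1) : ℝ))
    (fun t => g (T - t) K d₁) (fun t => g (T - t) K d₂)
  · continuity
  · exact (g_cont K d₁).comp (continuous_const.sub continuous_id)
  · exact (g_cont K d₂).comp (continuous_const.sub continuous_id)
  · intro t ht
    have := ht.1
    positivity
  · intro t ht
    exact g_nonneg _ (by linarith [ht.2]) K d₁
  · intro t ht
    exact g_nonneg _ (by linarith [ht.2]) K d₂
  · exact erlang_mass_le_one (m - 1) T hT0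
  · intro s hs t ht hst
    constructor
    · exact g_mono K d₁ hK (by linarith [ht.2]) (by linarith) (by linarith [hs.1])
    · exact g_mono K d₂ hK (by linarith [ht.2]) (by linarith) (by linarith [hs.1])
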